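/- arXiv:1812.11905 — 2 statements merged into one kernel-verified Lean document; each statement's English description precedes it below -/
import Mathlib

section
/- Let B be a Banach space, (X, X*) a biorthogonal pair with X = {x_k}_{k=1}^∞ ⊂ B nonzero and X* = {x*_k} ⊂ B*. Let ℕ_1, …, ℕ_ν be pairwise disjoint infinite subsets of ℕ with ⋃_{j=1}^ν ℕ_j = ℕ, and let X_j = {x_k : k ∈ ℕ_j}, X*_j = {x*_k : k ∈ ℕ_j}. If each pair (X_j, X*_j), 1 ≤ j ≤ ν, is bidemocratic for B, and for all 1 ≤ i < j ≤ ν the fundamental functions φ_{X_i} and φ_{X_j} are equivalent, then the pair (X, X*) is bidemocratic for B, and φ_X is equivalent to φ_{X_j} for every 1 ≤ j ≤ ν. -/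
/-- Fundamental function of the subsystem of `x` indexed by `S ⊆ ℕ`:
`φ_{X_S}(n) = sup { ‖∑_{k∈P} x_k/‖x_k‖‖ : P ⊆ S, |P| ≤ n }`. -/
noncomputable def fundFun {B : Type*} [NormedAddCommGroup B] [NormedSpace ℝ B]
    (x : ℕ → B) (S : Set ℕ) (n : ℕ) : ℝ :=
  sSup {r : ℝ | ∃ P : Finset ℕ, ↑P ⊆ S ∧ P.card ≤ n ∧
    r = ‖∑ k ∈ P, ‖x k‖⁻¹ • x k‖}

/-- Equivalence of two nonnegative functions on `ℕ`: `φ ≍ ψ` iff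
`C₁·φ(n) ≤ ψ(n) ≤ C₂·φ(n)` for some `0 < C₁ < C₂`. -/
def EquivFun (φ ψ : ℕ → ℝ) : Prop :=
  ∃ C₁ C₂ : ℝ, 0 < C₁ ∧ C₁ < C₂ ∧ ∀ n : ℕ, C₁ * φ n ≤ ψ n ∧ ψ n ≤ C₂ * φ n

/-- The biorthogonal pair of subsystems indexed by `S` is bidemocratic for `B`:
`φ_{X_S}(n) · φ*_{X*_S}(n) ≤ C·n` in quantified form. -/
def BidemPairOn {B : Type*} [NormedAddCommGroup B] [NormedSpace ℝ B]
    (x : ℕ → B) (xs : ℕ → B →L[ℝ] ℝ) (S : Set ℕ) : Prop :=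
  ∃ C : ℝ, 0 < C ∧ ∀ n : ℕ, ∀ P Q : Finset ℕ, ↑P ⊆ S → ↑Q ⊆ S →
    P.card ≤ n → Q.card ≤ n →
    ‖∑ k ∈ P, ‖x k‖⁻¹ • x k‖ * ‖∑ k ∈ Q, ‖x k‖ • xs k‖ ≤ C * n


section Aux

variable {B : Type*} [NormedAddCommGroup B] [NormedSpace ℝ B]

lemma fundFun_zero_mem (x : ℕ → B) (S : Set ℕ) (n : ℕ) :
    (0 : ℝ) ∈ {r : ℝ | ∃ P : Finset ℕ, ↑P ⊆ S ∧ P.card ≤ n ∧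
      r = ‖∑ k ∈ P, ‖x k‖⁻¹ • x k‖} :=
  ⟨∅, by simp, by simp, by simp⟩

lemma fundFun_bdd (x : ℕ → B) (hx : ∀ k, x k ≠ 0) (S : Set ℕ) (n : ℕ) :
    BddAbove {r : ℝ | ∃ P : Finset ℕ, ↑P ⊆ S ∧ P.card ≤ n ∧
      r = ‖∑ k ∈ P, ‖x k‖⁻¹ • x k‖} := by
  refine ⟨(n : ℝ), ?_⟩
  rintro r ⟨P, hP, hn, rfl⟩
  calc ‖∑ k ∈ P, ‖x k‖⁻¹ • x k‖ ≤ ∑ k ∈ P, ‖‖x k‖⁻¹ • x k‖ := norm_sum_le _ _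
    _ = ∑ k ∈ P, (1 : ℝ) := by
        refine Finset.sum_congr rfl fun k _ => ?_
        rw [norm_smul, norm_inv, norm_norm,
          inv_mul_cancel₀ (norm_ne_zero_iff.mpr (hx k))]
    _ = (P.card : ℝ) := by simp
    _ ≤ (n : ℝ) := Nat.cast_le.mpr hn

lemma le_fundFun (x : ℕ → B) (hx : ∀ k, x k ≠ 0) (S : Set ℕ) (n : ℕ)
    (P : Finset ℕ) (hP : ↑P ⊆ S) (hn : P.card ≤ n) :
    ‖∑ k ∈ P, ‖x k‖⁻¹ • x k‖ ≤ fundFun x S n :=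
  le_csSup (fundFun_bdd x hx S n) ⟨P, hP, hn, rfl⟩

lemma fundFun_nonneg (x : ℕ → B) (hx : ∀ k, x k ≠ 0) (S : Set ℕ) (n : ℕ) :
    0 ≤ fundFun x S n :=
  le_csSup (fundFun_bdd x hx S n) (fundFun_zero_mem x S n)

lemma fundFun_mono_set (x : ℕ → B) (hx : ∀ k, x k ≠ 0) (S : Set ℕ) (n : ℕ) :
    fundFun x S n ≤ fundFun x Set.univ n := by
  refine csSup_le_csSup (fundFun_bdd x hx Set.univ n) ⟨0, fundFun_zero_mem x S n⟩ ?_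
  rintro r ⟨P, hP, hn, rfl⟩
  exact ⟨P, by simp, hn, rfl⟩

end Aux

/-- if `ℕ` is split into finitely many pairwise disjoint infinite
pieces `N j` such that each subsystem pair is bidemocratic and the fundamental
functions of the subsystems are pairwise equivalent, then the whole pair is
bidemocratic and its fundamental function is equivalent to each `φ_{X_j}`. -/
theorem bidemocratic_of_bidemocratic_pieces
    {B : Type*} [NormedAddCommGroup B] [NormedSpace ℝ B] [CompleteSpace B]
    (x : ℕ → B) (xs : ℕ → B →L[ℝ] ℝ)
    (hx : ∀ k, x k ≠ 0)
    (hbiorth : ∀ k m, xs k (x m) = if k = m then 1 else 0)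
    (ν : ℕ) (hν : 0 < ν) (N : Fin ν → Set ℕ)
    (hdisj : ∀ i j : Fin ν, i ≠ j → Disjoint (N i) (N j))
    (hinf : ∀ j : Fin ν, (N j).Infinite)
    (hcover : ⋃ j : Fin ν, N j = Set.univ)
    (hpieces : ∀ j : Fin ν, BidemPairOn x xs (N j))
    (hequiv : ∀ i j : Fin ν, i < j →
      EquivFun (fundFun x (N i)) (fundFun x (N j))) :
    BidemPairOn x xs Set.univ ∧
      ∀ j : Fin ν, EquivFun (fundFun x Set.univ) (fundFun x (N j)) := by
  classical
  -- the fiber map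
  have hfex : ∀ k : ℕ, ∃ j : Fin ν, k ∈ N j := by
    intro k
    have hk : k ∈ ⋃ j : Fin ν, N j := by rw [hcover]; trivial
    simpa using hk
  set f : ℕ → Fin ν := fun k => (hfex k).choose with hfdef
  have hfmem : ∀ k, k ∈ N (f k) := fun k => (hfex k).choose_spec
  -- splitting a sum over fibers
  have hsplitB : ∀ (P : Finset ℕ) (v : ℕ → B),
      ∑ k ∈ P, v k = ∑ j : Fin ν, ∑ k ∈ P.filter (fun k => f k = j), v k :=
    fun P v => (Finset.sum_fiberwise P f v).symm
  have hsplitD : ∀ (P : Finset ℕ) (v : ℕ → B →L[ℝ] ℝ),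
      ∑ k ∈ P, v k = ∑ j : Fin ν, ∑ k ∈ P.filter (fun k => f k = j), v k :=
    fun P v => (Finset.sum_fiberwise P f v).symm
  have hfiber_sub : ∀ (P : Finset ℕ) (j : Fin ν),
      ↑(P.filter (fun k => f k = j)) ⊆ N j := by
    intro P j k hk
    simp only [Finset.coe_filter, Set.mem_setOf_eq] at hk
    exact hk.2 ▸ hfmem k
  have hfiber_card : ∀ (P : Finset ℕ) (j : Fin ν) (n : ℕ), P.card ≤ n →
      (P.filter (fun k => f k = j)).card ≤ n :=
    fun P j n hn => le_trans (Finset.card_filter_le _ _) hn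
  -- Lemma A: comparison constants between fundamental functions
  have hA : ∀ i j : Fin ν, ∃ D : ℝ, 0 < D ∧
      ∀ n : ℕ, fundFun x (N i) n ≤ D * fundFun x (N j) n := by
    intro i j
    rcases lt_trichotomy i j with h | h | h
    · obtain ⟨C₁, C₂, h1, h12, hc⟩ := hequiv i j h
      refine ⟨C₁⁻¹, inv_pos.mpr h1, fun n => ?_⟩
      have := (hc n).1
      rw [inv_mul_eq_div, le_div_iff₀ h1, mul_comm]
      exact this
    · exact ⟨1, one_pos, fun n => by rw [h, one_mul]⟩
    · obtain ⟨C₁, C₂, h1, h12, hc⟩ := hequiv j i h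
      exact ⟨C₂, lt_trans h1 h12, fun n => by
        have := (hc n).2; linarith [this]⟩
  choose D hDpos hD using hA
  -- Lemma B: fundamental function times dual norm bound
  have hB : ∀ j : Fin ν, ∃ C : ℝ, 0 < C ∧
      ∀ (n : ℕ) (Q : Finset ℕ), ↑Q ⊆ N j → Q.card ≤ n →
        fundFun x (N j) n * ‖∑ k ∈ Q, ‖x k‖ • xs k‖ ≤ C * n := by
    intro j
    obtain ⟨C, hC0, hC⟩ := hpieces j
    refine ⟨C, hC0, fun n Q hQ hQn => ?_⟩
    set b : ℝ := ‖∑ k ∈ Q, ‖x k‖ • xs k‖ with hb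
    rcases eq_or_lt_of_le (norm_nonneg (∑ k ∈ Q, ‖x k‖ • xs k)) with h0 | h0
    · rw [show b = 0 from hb.trans h0.symm, mul_zero]
      positivity
    · have hsup : fundFun x (N j) n ≤ C * n / b := by
        refine csSup_le ⟨0, fundFun_zero_mem x (N j) n⟩ ?_
        rintro r ⟨P, hP, hn, rfl⟩
        rw [le_div_iff₀ h0]
        exact hC n P Q hP hQ hn hQn
      calc fundFun x (N j) n * b ≤ (C * n / b) * b :=
            mul_le_mul_of_nonneg_right hsup (le_of_lt h0)
        _ = C * n := div_mul_cancel₀ _ (ne_of_gt h0)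
  choose Cp hCpos hCp using hB
  -- norm of a fiber piece is at most the fiber fundamental function
  have hpieceA : ∀ (n : ℕ) (P : Finset ℕ) (i : Fin ν), P.card ≤ n →
      ‖∑ k ∈ P.filter (fun k => f k = i), ‖x k‖⁻¹ • x k‖ ≤ fundFun x (N i) n :=
    fun n P i hn => le_fundFun x hx (N i) n _ (hfiber_sub P i) (hfiber_card P i n hn)
  -- main product bound for arbitrary P Q
  have hmain : ∀ (n : ℕ) (P Q : Finset ℕ), P.card ≤ n → Q.card ≤ n →
      ‖∑ k ∈ P, ‖x k‖⁻¹ • x k‖ * ‖∑ k ∈ Q, ‖x k‖ • xs k‖ ≤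
        (∑ i : Fin ν, ∑ j : Fin ν, D i j * Cp j) * n := by
    intro n P Q hPn hQn
    have hPle : ‖∑ k ∈ P, ‖x k‖⁻¹ • x k‖ ≤
        ∑ i : Fin ν, ‖∑ k ∈ P.filter (fun k => f k = i), ‖x k‖⁻¹ • x k‖ := by
      rw [hsplitB P (fun k => ‖x k‖⁻¹ • x k)]
      exact norm_sum_le _ _
    have hQle : ‖∑ k ∈ Q, ‖x k‖ • xs k‖ ≤
        ∑ j : Fin ν, ‖∑ k ∈ Q.filter (fun k => f k = j), ‖x k‖ • xs k‖ := by
      rw [hsplitD Q (fun k => ‖x k‖ • xs k)]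
      exact norm_sum_le _ _
    calc ‖∑ k ∈ P, ‖x k‖⁻¹ • x k‖ * ‖∑ k ∈ Q, ‖x k‖ • xs k‖
        ≤ (∑ i : Fin ν, ‖∑ k ∈ P.filter (fun k => f k = i), ‖x k‖⁻¹ • x k‖) *
          (∑ j : Fin ν, ‖∑ k ∈ Q.filter (fun k => f k = j), ‖x k‖ • xs k‖) := by
          apply mul_le_mul hPle hQle (norm_nonneg _)
          exact Finset.sum_nonneg fun i _ => norm_nonneg _
      _ = ∑ i : Fin ν, ∑ j : Fin ν,
            ‖∑ k ∈ P.filter (fun k => f k = i), ‖x k‖⁻¹ • x k‖ *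
            ‖∑ k ∈ Q.filter (fun k => f k = j), ‖x k‖ • xs k‖ := by
          rw [Finset.sum_mul_sum]
      _ ≤ ∑ i : Fin ν, ∑ j : Fin ν, (D i j * Cp j) * n := by
          refine Finset.sum_le_sum fun i _ => Finset.sum_le_sum fun j _ => ?_
          calc ‖∑ k ∈ P.filter (fun k => f k = i), ‖x k‖⁻¹ • x k‖ *
                ‖∑ k ∈ Q.filter (fun k => f k = j), ‖x k‖ • xs k‖
              ≤ (D i j * fundFun x (N j) n) *
                ‖∑ k ∈ Q.filter (fun k => f k = j), ‖x k‖ • xs k‖ := by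
                apply mul_le_mul_of_nonneg_right _ (norm_nonneg _)
                exact le_trans (hpieceA n P i hPn) (hD i j n)
            _ = D i j * (fundFun x (N j) n *
                ‖∑ k ∈ Q.filter (fun k => f k = j), ‖x k‖ • xs k‖) := by ring
            _ ≤ D i j * (Cp j * n) := by
                apply mul_le_mul_of_nonneg_left _ (le_of_lt (hDpos i j))
                exact hCp j n _ (hfiber_sub Q j) (hfiber_card Q j n hQn)
            _ = (D i j * Cp j) * n := by ring
      _ = (∑ i : Fin ν, ∑ j : Fin ν, D i j * Cp j) * n := by
          rw [Finset.sum_mul]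
          exact Finset.sum_congr rfl fun i _ => (Finset.sum_mul _ _ _).symm
  haveI : Nonempty (Fin ν) := Fin.pos_iff_nonempty.mp hν
  have hKpos : 0 < ∑ i : Fin ν, ∑ j : Fin ν, D i j * Cp j := by
    refine Finset.sum_pos (fun i _ => Finset.sum_pos (fun j _ => ?_) Finset.univ_nonempty)
      Finset.univ_nonempty
    exact mul_pos (hDpos i j) (hCpos j)
  constructor
  · exact ⟨_, hKpos, fun n P Q _ _ hPn hQn => hmain n P Q hPn hQn⟩
  · intro j
    -- the whole fundamental function is controlled by piece j
    have hupper : ∀ n : ℕ, fundFun x Set.univ n ≤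
        (∑ i : Fin ν, D i j) * fundFun x (N j) n := by
      intro n
      have h1 : fundFun x Set.univ n ≤ ∑ i : Fin ν, fundFun x (N i) n := by
        refine csSup_le ⟨0, fundFun_zero_mem x Set.univ n⟩ ?_
        rintro r ⟨P, hP, hn, rfl⟩
        calc ‖∑ k ∈ P, ‖x k‖⁻¹ • x k‖
            ≤ ∑ i : Fin ν, ‖∑ k ∈ P.filter (fun k => f k = i), ‖x k‖⁻¹ • x k‖ := by
              rw [hsplitB P (fun k => ‖x k‖⁻¹ • x k)]
              exact norm_sum_le _ _
          _ ≤ ∑ i : Fin ν, fundFun x (N i) n :=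
              Finset.sum_le_sum fun i _ => hpieceA n P i hn
      calc fundFun x Set.univ n ≤ ∑ i : Fin ν, fundFun x (N i) n := h1
        _ ≤ ∑ i : Fin ν, D i j * fundFun x (N j) n :=
            Finset.sum_le_sum fun i _ => hD i j n
        _ = (∑ i : Fin ν, D i j) * fundFun x (N j) n := (Finset.sum_mul _ _ _).symm
    have hSpos : 0 < ∑ i : Fin ν, D i j :=
      Finset.sum_pos (fun i _ => hDpos i j) Finset.univ_nonempty
    refine ⟨(∑ i : Fin ν, D i j)⁻¹, (∑ i : Fin ν, D i j)⁻¹ + 1,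
      inv_pos.mpr hSpos, by linarith, fun n => ⟨?_, ?_⟩⟩
    · rw [inv_mul_eq_div, div_le_iff₀ hSpos, mul_comm]
      exact hupper n
    · have h2 : fundFun x (N j) n ≤ fundFun x Set.univ n :=
        fundFun_mono_set x hx (N j) n
      have h3 : 0 ≤ fundFun x Set.univ n := fundFun_nonneg x hx Set.univ n
      nlinarith [inv_pos.mpr hSpos]
end

section
/- Let p > 2, p' = p/(p−1), and l > p/(2(p−2)). Then the pair (𝔉_l, 𝔉_l) is bidemocratic neither for L^p[−1,1] nor for L^{p'}[−1,1]: for every constant C > 0 there exists n ∈ ℕ such that Φ_p(n)·Φ*_{p'}(n) > C·n, and for every C > 0 there exists n ∈ ℕ such that Φ_{p'}(n)·Φ*_p(n) > C·n, where Φ_q(n) = sup_{|P|≤n} ‖∑_{k∈P} f_k^l/‖f_k^l‖_{L^q[−1,1]}‖_{L^q[−1,1]} and Φ*_{q'}(n) = sup_{|P|≤n} ‖∑_{k∈P} ‖f_k^l‖_{L^q[−1,1]}·f_k^l‖_{L^{q'}[−1,1]}. -/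
open MeasureTheory

/-- The Rademacher functions `r_k(t) = sgn(sin(2^k π t))` on `[0,1]`. -/
noncomputable def rademacher (k : ℕ) (t : ℝ) : ℝ :=
  Real.sign (Real.sin ((2 : ℝ) ^ k * Real.pi * t))

/-- `k_n = 2(2^n − 1)`, i.e. `k_0 = 0` and `k_n = k_{n−1} + 2^n`. -/
def kseq (n : ℕ) : ℕ := 2 * (2 ^ n - 1)

/-- The `j`-th of the `2^n` equal subintervals (each of length `2^{−2n}`)
partitioning `(−2^{−n+1}, −2^{−n}]`, for `1 ≤ j ≤ 2^n`. -/
noncomputable def Delta (n j : ℕ) : Set ℝ :=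
  Set.Ioc (-(2 : ℝ) ^ ((1 : ℝ) - (n : ℝ)) + ((j : ℝ) - 1) * (2 : ℝ) ^ (-(2 : ℝ) * (n : ℝ)))
          (-(2 : ℝ) ^ ((1 : ℝ) - (n : ℝ)) + (j : ℝ) * (2 : ℝ) ^ (-(2 : ℝ) * (n : ℝ)))

/-- The function `f_j^{(n,l)}`: on `[−1,0)` it equals
`√(1 − 2^{−n/l})·χ_j^n` where `χ_j^n = 2^n·1_{Δ_j^n}`, and on `[0,1]` it equals
`2^{−n/(2l)}·r_{k_{n−1}+j}`. -/
noncomputable def fjn (l : ℝ) (n j : ℕ) (x : ℝ) : ℝ :=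
  if x < 0 then
    Real.sqrt (1 - (2 : ℝ) ^ (-(n : ℝ) / l)) *
      Set.indicator (Delta n j) (fun _ => (2 : ℝ) ^ n) x
  else
    (2 : ℝ) ^ (-(n : ℝ) / (2 * l)) * rademacher (kseq (n - 1) + j) x

/-- `f_k^l = f_j^{(n,l)}` for `k = k_{n−1} + j`, `1 ≤ j ≤ 2^n`; for `k ≥ 1` the
block index is `n = log₂(k+1)` and `j = k + 2 − 2^n`. -/
noncomputable def fk (l : ℝ) (k : ℕ) : ℝ → ℝ :=
  fjn l (Nat.log 2 (k + 1)) (k + 2 - 2 ^ Nat.log 2 (k + 1))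

/-- `‖f‖_{L^p[−1,1]} = (∫_{−1}^1 |f|^p)^{1/p}`. -/
noncomputable def lpNormI (p : ℝ) (f : ℝ → ℝ) : ℝ :=
  (∫ x in (-1 : ℝ)..1, |f x| ^ p) ^ (1 / p)


/-!
Already `n = 1` breaks bidemocracy: for `P = Q = {k}` the normalized sum has norm `1` and the
dual sum has norm `‖f_k‖_q ‖f_k‖_{q'}`, so it suffices that these products are unbounded.
For `k = 2^n − 1`, i.e. `f_1^{(n,l)}`, the spike `√(1 − 2^{−n/l}) 2^n` on `Δ_1^n`, an interval
of length `2^{−2n}`, gives `‖f_k‖_q ≳ 2^{n(1 − 2/q)}`, while the Rademacher part gives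
`‖f_k‖_r ≥ 2^{−n/(2l)}` for every `r`. For `q = p` the product grows like
`2^{n(1 − 2/p − 1/(2l))}`, and this exponent is positive exactly when `l > p/(2(p−2))`.
-/

open Set

lemma Real.measurable_sign : Measurable Real.sign :=
  Measurable.ite (measurableSet_lt measurable_id measurable_const) measurable_const
    (Measurable.ite (measurableSet_lt measurable_const measurable_id) measurable_const
      measurable_const)

section lpNormI

variable {q : ℝ}

lemma lpNormI_const_mul (hq : 0 < q) (c : ℝ) (f : ℝ → ℝ) :
    lpNormI q (fun x => c * f x) = |c| * lpNormI q f := by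
  have hnonneg : 0 ≤ ∫ x in (-1 : ℝ)..1, |f x| ^ q :=
    intervalIntegral.integral_nonneg (by norm_num) fun x _ => by positivity
  simp only [lpNormI, abs_mul, Real.mul_rpow (abs_nonneg c) (abs_nonneg _),
    intervalIntegral.integral_const_mul]
  rw [Real.mul_rpow (by positivity) hnonneg, ← Real.rpow_mul (abs_nonneg c),
    mul_one_div_cancel hq.ne', Real.rpow_one]

lemma lpNormI_inv_mul_mul_lpNormI_mul {r : ℝ} (hq : 0 < q) (hr : 0 < r) {f : ℝ → ℝ}
    (hf : 0 < lpNormI q f) :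
    lpNormI q (fun x => (lpNormI q f)⁻¹ * f x) * lpNormI r (fun x => lpNormI q f * f x) =
      lpNormI q f * lpNormI r f := by
  rw [lpNormI_const_mul hq, lpNormI_const_mul hr, abs_inv, abs_of_pos hf,
    inv_mul_cancel₀ hf.ne', one_mul]

lemma intervalIntegrable_abs_rpow_of_abs_le (hq : 0 ≤ q) {f : ℝ → ℝ} (hf : Measurable f)
    {M : ℝ} (hM : ∀ x, |f x| ≤ M) (a b : ℝ) :
    IntervalIntegrable (fun x => |f x| ^ q) volume a b := by
  rw [intervalIntegrable_iff]
  refine Measure.integrableOn_of_bounded (M := M ^ q) measure_Ioc_lt_top.ne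
    (hf.abs.pow_const q).aestronglyMeasurable (Filter.Eventually.of_forall fun x => ?_)
  rw [Real.norm_of_nonneg (by positivity)]
  exact Real.rpow_le_rpow (abs_nonneg _) (hM x) hq

lemma mul_measureReal_rpow_le_lpNormI (hq : 0 < q) {f : ℝ → ℝ}
    (hf : IntervalIntegrable (fun x => |f x| ^ q) volume (-1) 1) {s : Set ℝ}
    (hs : MeasurableSet s) (hs_sub : s ⊆ Ioc (-1) 1) {c : ℝ} (hc : 0 ≤ c)
    (hcf : ∀ᵐ x, x ∈ s → c ≤ |f x|) :
    c * volume.real s ^ (1 / q) ≤ lpNormI q f := by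
  have hf' : IntegrableOn (fun x => |f x| ^ q) (Ioc (-1) 1) :=
    (intervalIntegrable_iff_integrableOn_Ioc_of_le (by norm_num)).mp hf
  have hs_fin : volume s < ⊤ := (measure_mono hs_sub).trans_lt measure_Ioc_lt_top
  have hintegral : c ^ q * volume.real s ≤ ∫ x in (-1 : ℝ)..1, |f x| ^ q := calc
    c ^ q * volume.real s = ∫ _ in s, c ^ q := by rw [setIntegral_const, smul_eq_mul, mul_comm]
    _ ≤ ∫ x in s, |f x| ^ q :=
      setIntegral_mono_ae_restrict (integrableOn_const hs_fin.ne) (hf'.mono_set hs_sub)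
        ((ae_restrict_iff' hs).mpr (hcf.mono fun x hx hxs =>
          Real.rpow_le_rpow hc (hx hxs) hq.le))
    _ ≤ ∫ x in Ioc (-1) 1, |f x| ^ q :=
      setIntegral_mono_set hf' (Filter.Eventually.of_forall fun x => by positivity)
        (Filter.Eventually.of_forall hs_sub)
    _ = ∫ x in (-1 : ℝ)..1, |f x| ^ q := (intervalIntegral.integral_of_le (by norm_num)).symm
  calc c * volume.real s ^ (1 / q) = (c ^ q * volume.real s) ^ (1 / q) := by
        rw [Real.mul_rpow (by positivity) measureReal_nonneg, ← Real.rpow_mul hc,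
          mul_one_div_cancel hq.ne', Real.rpow_one]
    _ ≤ lpNormI q f := Real.rpow_le_rpow (by positivity) hintegral (by positivity)

end lpNormI

lemma measurable_rademacher (k : ℕ) : Measurable (rademacher k) :=
  Real.measurable_sign.comp (by fun_prop)

lemma abs_rademacher_le_one (k : ℕ) (x : ℝ) : |rademacher k x| ≤ 1 := by
  rcases Real.sign_apply_eq (Real.sin ((2 : ℝ) ^ k * Real.pi * x)) with h | h | h <;>
    simp [rademacher, h]

/-- `sin (2^k π t)` vanishes only on the countable set `2^{-k} ℤ`. -/
lemma abs_rademacher_ae_eq_one (k : ℕ) : ∀ᵐ x : ℝ, |rademacher k x| = 1 := by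
  have hzero : {t : ℝ | Real.sin ((2 : ℝ) ^ k * Real.pi * t) = 0} ⊆
      range (fun m : ℤ => (m : ℝ) / 2 ^ k) := by
    intro t ht
    obtain ⟨m, hm⟩ := Real.sin_eq_zero_iff.mp ht
    refine ⟨m, ?_⟩
    rw [show (2 : ℝ) ^ k * Real.pi * t = (2 ^ k * t) * Real.pi by ring] at hm
    simp only [mul_right_cancel₀ Real.pi_ne_zero hm]
    field_simp
  have hnull := measure_mono_null hzero ((countable_range _).measure_zero volume)
  filter_upwards [measure_eq_zero_iff_ae_notMem.mp hnull] with x hx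
  rcases Real.sign_apply_eq_of_ne_zero _ hx with h | h <;> simp [rademacher, h]

lemma measurableSet_Delta (n j : ℕ) : MeasurableSet (Delta n j) := measurableSet_Ioc

lemma measureReal_Delta (n j : ℕ) : volume.real (Delta n j) = (2 : ℝ) ^ (-(2 : ℝ) * n) := by
  rw [Delta, Real.volume_real_Ioc_of_le
    (by nlinarith [Real.rpow_pos_of_pos two_pos (-(2 : ℝ) * n)])]
  ring

lemma Delta_subset_Ioo {n j : ℕ} (hn : 1 ≤ n) (hj : 1 ≤ j) (hjn : j ≤ 2 ^ n) :
    Delta n j ⊆ Ioo (-1) 0 := by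
  have hn' : (1 : ℝ) ≤ n := by exact_mod_cast hn
  have hleft : (2 : ℝ) ^ ((1 : ℝ) - n) ≤ 1 :=
    Real.rpow_le_one_of_one_le_of_nonpos one_le_two (by linarith)
  have hright : (j : ℝ) * 2 ^ (-(2 : ℝ) * n) < 2 ^ ((1 : ℝ) - n) := calc
    (j : ℝ) * 2 ^ (-(2 : ℝ) * n) ≤ 2 ^ (n : ℝ) * 2 ^ (-(2 : ℝ) * n) := by
      gcongr
      rw [Real.rpow_natCast]
      exact_mod_cast hjn
    _ = 2 ^ (-(n : ℝ)) := by rw [← Real.rpow_add two_pos]; ring_nf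
    _ < 2 ^ ((1 : ℝ) - n) := Real.rpow_lt_rpow_of_exponent_lt one_lt_two (by linarith)
  have hshift : 0 ≤ ((j : ℝ) - 1) * 2 ^ (-(2 : ℝ) * n) :=
    mul_nonneg (by simp [hj]) (by positivity)
  rintro x ⟨hx₁, hx₂⟩
  constructor <;> linarith

section fjn

variable (l : ℝ) (n j : ℕ)

lemma measurable_fjn : Measurable (fjn l n j) :=
  Measurable.ite (measurableSet_lt measurable_id measurable_const)
    ((measurable_const.indicator (measurableSet_Delta n j)).const_mul _)
    ((measurable_rademacher _).const_mul _)

lemma abs_fjn_le (x : ℝ) : |fjn l n j x| ≤ 2 ^ n + (2 : ℝ) ^ (-(n : ℝ) / (2 * l)) := by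
  have hsqrt : Real.sqrt (1 - (2 : ℝ) ^ (-(n : ℝ) / l)) ≤ 1 :=
    Real.sqrt_le_one.mpr (by linarith [Real.rpow_pos_of_pos two_pos (-(n : ℝ) / l)])
  have hind : |indicator (Delta n j) (fun _ => (2 : ℝ) ^ n) x| ≤ 2 ^ n := by
    unfold indicator; split_ifs <;> simp
  unfold fjn
  split_ifs
  · rw [abs_mul, abs_of_nonneg (Real.sqrt_nonneg _)]
    nlinarith [abs_nonneg (indicator (Delta n j) (fun _ => (2 : ℝ) ^ n) x),
      Real.rpow_pos_of_pos two_pos (-(n : ℝ) / (2 * l))]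
  · rw [abs_mul, abs_of_pos (Real.rpow_pos_of_pos two_pos _)]
    nlinarith [abs_rademacher_le_one (kseq (n - 1) + j) x,
      Real.rpow_pos_of_pos two_pos (-(n : ℝ) / (2 * l)), pow_pos (two_pos : (0 : ℝ) < 2) n]

lemma intervalIntegrable_abs_fjn_rpow {q : ℝ} (hq : 0 ≤ q) (a b : ℝ) :
    IntervalIntegrable (fun x => |fjn l n j x| ^ q) volume a b :=
  intervalIntegrable_abs_rpow_of_abs_le hq (measurable_fjn l n j) (abs_fjn_le l n j) a b

lemma abs_fjn_ae_eq_of_nonneg :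
    ∀ᵐ x, 0 ≤ x → |fjn l n j x| = (2 : ℝ) ^ (-(n : ℝ) / (2 * l)) := by
  filter_upwards [abs_rademacher_ae_eq_one (kseq (n - 1) + j)] with x hx hx0
  rw [fjn, if_neg hx0.not_gt, abs_mul, hx, abs_of_pos (Real.rpow_pos_of_pos two_pos _), mul_one]

lemma fjn_of_mem_Delta (hn : 1 ≤ n) (hj : 1 ≤ j) (hjn : j ≤ 2 ^ n) {x : ℝ}
    (hx : x ∈ Delta n j) : fjn l n j x = Real.sqrt (1 - (2 : ℝ) ^ (-(n : ℝ) / l)) * 2 ^ n := by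
  rw [fjn, if_pos (Delta_subset_Ioo hn hj hjn hx).2, indicator_of_mem hx]

end fjn

lemma rpow_le_lpNormI_fjn {q : ℝ} (hq : 0 < q) (l : ℝ) (n j : ℕ) :
    (2 : ℝ) ^ (-(n : ℝ) / (2 * l)) ≤ lpNormI q (fjn l n j) := by
  simpa using mul_measureReal_rpow_le_lpNormI hq (intervalIntegrable_abs_fjn_rpow l n j hq.le _ _)
    measurableSet_Ioc (Ioc_subset_Ioc (by norm_num) le_rfl) (by positivity)
    ((abs_fjn_ae_eq_of_nonneg l n j).mono fun x hx hxs => (hx hxs.1.le).ge)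

lemma sqrt_mul_rpow_le_lpNormI_fjn {q : ℝ} (hq : 0 < q) (l : ℝ) {n j : ℕ} (hn : 1 ≤ n)
    (hj : 1 ≤ j) (hjn : j ≤ 2 ^ n) :
    Real.sqrt (1 - (2 : ℝ) ^ (-(n : ℝ) / l)) * 2 ^ (n * (1 - 2 / q)) ≤ lpNormI q (fjn l n j) := by
  have hpow : (2 : ℝ) ^ n * ((2 : ℝ) ^ (-(2 : ℝ) * n)) ^ (1 / q) = 2 ^ (n * (1 - 2 / q)) := by
    rw [← Real.rpow_natCast, ← Real.rpow_mul zero_le_two, ← Real.rpow_add two_pos]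
    ring_nf
  have h := mul_measureReal_rpow_le_lpNormI hq (intervalIntegrable_abs_fjn_rpow l n j hq.le _ _)
    (c := Real.sqrt (1 - (2 : ℝ) ^ (-(n : ℝ) / l)) * 2 ^ n)
    (measurableSet_Delta n j) ((Delta_subset_Ioo hn hj hjn).trans
      (Ioo_subset_Ioc_self.trans (Ioc_subset_Ioc le_rfl (zero_le_one' ℝ))))
    (by positivity) (Filter.Eventually.of_forall fun x hx => by
      rw [fjn_of_mem_Delta l n j hn hj hjn hx]; exact le_abs_self _)
  rwa [measureReal_Delta, mul_assoc, hpow] at h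

lemma sqrt_mul_rpow_le_lpNormI_mul_lpNormI_fjn {q r l : ℝ} (hq : 0 < q) (hr : 0 < r)
    (hl : 0 < l) {n j : ℕ} (hn : 1 ≤ n) (hj : 1 ≤ j) (hjn : j ≤ 2 ^ n) :
    Real.sqrt (1 - (2 : ℝ) ^ (-1 / l)) * 2 ^ (n * (1 - 2 / q - 1 / (2 * l))) ≤
      lpNormI q (fjn l n j) * lpNormI r (fjn l n j) := calc
  _ ≤ Real.sqrt (1 - (2 : ℝ) ^ (-(n : ℝ) / l)) * 2 ^ (n * (1 - 2 / q)) *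
      (2 : ℝ) ^ (-(n : ℝ) / (2 * l)) := by
    rw [mul_assoc, ← Real.rpow_add two_pos,
      show (n : ℝ) * (1 - 2 / q) + -n / (2 * l) = n * (1 - 2 / q - 1 / (2 * l)) by ring]
    have hn' : (1 : ℝ) ≤ n := by exact_mod_cast hn
    gcongr
    exact one_le_two
  _ ≤ lpNormI q (fjn l n j) * lpNormI r (fjn l n j) :=
    mul_le_mul (sqrt_mul_rpow_le_lpNormI_fjn hq l hn hj hjn) (rpow_le_lpNormI_fjn hr l n j)
      (by positivity) ((Real.rpow_pos_of_pos two_pos _).le.trans (rpow_le_lpNormI_fjn hq l n j))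

lemma fk_two_pow_sub_one (l : ℝ) (n : ℕ) : fk l (2 ^ n - 1) = fjn l n 1 := by
  have h : 1 ≤ 2 ^ n := Nat.one_le_two_pow
  rw [fk, Nat.sub_add_cancel h, Nat.log_pow one_lt_two, show 2 ^ n - 1 + 2 - 2 ^ n = 1 by omega]

lemma lpNormI_fk_pos {q : ℝ} (hq : 0 < q) (l : ℝ) (k : ℕ) : 0 < lpNormI q (fk l k) :=
  (Real.rpow_pos_of_pos two_pos _).trans_le (rpow_le_lpNormI_fjn hq l _ _)

lemma exists_lt_lpNormI_mul_lpNormI_fk {p l r : ℝ} (hp : 2 < p) (hl : p / (2 * (p - 2)) < l)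
    (hr : 0 < r) (C : ℝ) : ∃ k, 1 ≤ k ∧ C < lpNormI p (fk l k) * lpNormI r (fk l k) := by
  have hl0 : 0 < l := (div_pos (by linarith) (by linarith)).trans hl
  have hε : 0 < 1 - 2 / p - 1 / (2 * l) := by
    rw [div_lt_iff₀ (by linarith)] at hl
    rw [show 1 - 2 / p - 1 / (2 * l) = (l * (2 * (p - 2)) - p) / (2 * l * p) by field_simp]
    exact div_pos (by linarith) (by positivity)
  set ε := 1 - 2 / p - 1 / (2 * l)
  set c := Real.sqrt (1 - (2 : ℝ) ^ (-1 / l))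
  have hc : 0 < c := Real.sqrt_pos.mpr (sub_pos.mpr
    (Real.rpow_lt_one_of_one_lt_of_neg one_lt_two (div_neg_of_neg_of_pos (by norm_num) hl0)))
  obtain ⟨N, hN⟩ := pow_unbounded_of_one_lt (C / c) (Real.one_lt_rpow one_lt_two hε)
  refine ⟨2 ^ (N + 1) - 1, Nat.le_sub_one_of_lt (Nat.one_lt_two_pow N.succ_ne_zero), ?_⟩
  calc C < c * ((2 : ℝ) ^ ε) ^ N := by rwa [← div_lt_iff₀' hc]
    _ ≤ c * ((2 : ℝ) ^ ε) ^ (N + 1) := by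
      gcongr
      exacts [(Real.one_lt_rpow one_lt_two hε).le, N.le_succ]
    _ = c * 2 ^ (((N + 1 : ℕ) : ℝ) * ε) := by
      rw [← Real.rpow_natCast, ← Real.rpow_mul zero_le_two, mul_comm ε]
    _ ≤ _ := by
      rw [fk_two_pow_sub_one]
      exact sqrt_mul_rpow_le_lpNormI_mul_lpNormI_fjn (by linarith) hr hl0 N.succ_pos.nat_succ_le
        le_rfl Nat.one_le_two_pow

/-- for `p > 2`, `p' = p/(p−1)` and `l > p/(2(p−2))`, the pair
`(𝔉_l, 𝔉_l)` is bidemocratic neither for `L^p[−1,1]` nor for `L^{p'}[−1,1]`: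
for every `C > 0` there is `n` with `Φ_p(n)·Φ*_{p'}(n) > C·n`, and likewise
`Φ_{p'}(n)·Φ*_p(n) > C·n` (the suprema being witnessed by sets `P, Q` of
cardinality at most `n`). -/
theorem frakF_not_bidemocratic (p l : ℝ) (hp : 2 < p)
    (hl : p / (2 * (p - 2)) < l) :
    (∀ C : ℝ, 0 < C → ∃ n : ℕ, ∃ P Q : Finset ℕ,
      (∀ k ∈ P, 1 ≤ k) ∧ (∀ k ∈ Q, 1 ≤ k) ∧ P.card ≤ n ∧ Q.card ≤ n ∧
      C * n <
        lpNormI p (fun x => ∑ k ∈ P, (lpNormI p (fk l k))⁻¹ * fk l k x) *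
          lpNormI (p / (p - 1))
            (fun x => ∑ k ∈ Q, lpNormI p (fk l k) * fk l k x)) ∧
    (∀ C : ℝ, 0 < C → ∃ n : ℕ, ∃ P Q : Finset ℕ,
      (∀ k ∈ P, 1 ≤ k) ∧ (∀ k ∈ Q, 1 ≤ k) ∧ P.card ≤ n ∧ Q.card ≤ n ∧
      C * n <
        lpNormI (p / (p - 1))
            (fun x => ∑ k ∈ P, (lpNormI (p / (p - 1)) (fk l k))⁻¹ * fk l k x) *
          lpNormI p (fun x => ∑ k ∈ Q, lpNormI (p / (p - 1)) (fk l k) * fk l k x)) := by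
  have hp₀ : 0 < p := by linarith
  have hp' : 0 < p / (p - 1) := div_pos hp₀ (by linarith)
  refine ⟨fun C _ => ?_, fun C _ => ?_⟩
  · obtain ⟨k, hk, hC⟩ := exists_lt_lpNormI_mul_lpNormI_fk hp hl hp' C
    refine ⟨1, {k}, {k}, by simpa, by simpa, le_rfl, le_rfl, ?_⟩
    simpa only [Finset.sum_singleton, Nat.cast_one, mul_one,
      lpNormI_inv_mul_mul_lpNormI_mul hp₀ hp' (lpNormI_fk_pos hp₀ l k)] using hC
  · obtain ⟨k, hk, hC⟩ := exists_lt_lpNormI_mul_lpNormI_fk hp hl hp' C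
    refine ⟨1, {k}, {k}, by simpa, by simpa, le_rfl, le_rfl, ?_⟩
    simpa only [Finset.sum_singleton, Nat.cast_one, mul_one, mul_comm (lpNormI p _),
      lpNormI_inv_mul_mul_lpNormI_mul hp' hp₀ (lpNormI_fk_pos hp' l k)] using hC
end
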